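/- arXiv:1903.00748 — 2 statements merged into one kernel-verified Lean document; each statement's English description precedes it below -/
import Mathlib

section
/- Let ε > 0, q ≥ 2 a real number, ℓ ≥ 3 an integer, and n an integer with n ≥ 4(1 + 2/ε)·ℓ. Then a·(q/(q-1))^{n/ℓ}·q^{-n²/(2ℓ) + 3n/2} < q^{-n²/((2+ε)ℓ)}, where a = 2.3749. -/
/-- Real-analytic inequality: for `ε > 0`, real `q ≥ 2`, integers `ℓ ≥ 3` and
`n ≥ 4(1 + 2/ε)ℓ`, one has
`a·(q/(q-1))^{n/ℓ}·q^{-n²/(2ℓ) + 3n/2} < q^{-n²/((2+ε)ℓ)}` with `a = 2.3749`. -/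
theorem analytic_bound (ε q : ℝ) (hε : 0 < ε) (hq : 2 ≤ q) (ℓ n : ℕ)
    (hl : 3 ≤ ℓ) (hn : 4 * (1 + 2 / ε) * ℓ ≤ (n : ℝ)) :
    (2.3749 : ℝ) * (q / (q - 1)) ^ ((n : ℝ) / ℓ) *
        q ^ (-(n : ℝ) ^ 2 / (2 * ℓ) + 3 * n / 2) <
      q ^ (-(n : ℝ) ^ 2 / ((2 + ε) * ℓ)) := by
  have hq1 : (1:ℝ) < q := by linarith
  have hqpos : (0:ℝ) < q := by linarith
  have hℓ : (3:ℝ) ≤ (ℓ : ℝ) := by exact_mod_cast hl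
  have hℓpos : (0:ℝ) < (ℓ : ℝ) := by linarith
  have hεinv : (0:ℝ) < 2 / ε := by positivity
  have hn12 : (12:ℝ) ≤ (n : ℝ) := by nlinarith
  have hn0 : (0:ℝ) ≤ (n : ℝ) := by linarith
  -- from hn : ε * n ≥ 4 (ε + 2) ℓ
  have hne : 4 * (ε + 2) * ℓ ≤ ε * n := by
    have h1 : (4 * (1 + 2 / ε) * ℓ) * ε = 4 * (ε + 2) * ℓ := by
      field_simp
    have := mul_le_mul_of_nonneg_right hn hε.le
    linarith [h1 ▸ this]
  -- polynomial inequality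
  have hpoly : 4 * (ℓ:ℝ) * (2 + ε) + 2 * n * (2 + ε) + 3 * n * ℓ * (2 + ε) ≤ ε * n ^ 2 := by
    have h2 : 4 * (ε + 2) * ℓ * n ≤ ε * n * n := mul_le_mul_of_nonneg_right hne hn0
    nlinarith [mul_nonneg (sub_nonneg.mpr hℓ) (sub_nonneg.mpr hn12), hε.le]
  -- exponent inequality
  have hD : (0:ℝ) < (2 + ε) * ℓ := by positivity
  have hexp : (2:ℝ) + (n:ℝ) / ℓ + (-(n : ℝ) ^ 2 / (2 * ℓ) + 3 * n / 2)
      ≤ -(n : ℝ) ^ 2 / ((2 + ε) * ℓ) := by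
    rw [← sub_nonneg]
    have expand : -(n:ℝ) ^ 2 / ((2 + ε) * ℓ) -
        ((2:ℝ) + (n:ℝ) / ℓ + (-(n : ℝ) ^ 2 / (2 * ℓ) + 3 * n / 2)) =
        (ε * n ^ 2 - (4 * (ℓ:ℝ) * (2 + ε) + 2 * n * (2 + ε) + 3 * n * ℓ * (2 + ε))) /
          (2 * (2 + ε) * ℓ) := by
      field_simp
      ring
    rw [expand]
    apply div_nonneg (by linarith) (by positivity)
  have hbase : q / (q - 1) ≤ q := by
    rw [div_le_iff₀ (by linarith)]
    nlinarith
  have hb0 : (0:ℝ) ≤ q / (q - 1) := div_nonneg hqpos.le (by linarith)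
  have h2q : (2.3749:ℝ) < q ^ (2:ℝ) := by
    rw [show (2:ℝ) = ((2:ℕ):ℝ) by norm_num, Real.rpow_natCast]
    nlinarith
  calc (2.3749 : ℝ) * (q / (q - 1)) ^ ((n : ℝ) / ℓ) *
        q ^ (-(n : ℝ) ^ 2 / (2 * ℓ) + 3 * n / 2)
      < q ^ (2:ℝ) * q ^ ((n:ℝ)/ℓ) * q ^ (-(n : ℝ) ^ 2 / (2 * ℓ) + 3 * n / 2) := by
        have hmono : (q / (q - 1)) ^ ((n : ℝ) / ℓ) ≤ q ^ ((n:ℝ)/ℓ) :=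
          Real.rpow_le_rpow hb0 hbase (by positivity)
        have hpos1 : (0:ℝ) < q ^ ((n:ℝ)/ℓ) := Real.rpow_pos_of_pos hqpos _
        have hpos2 : (0:ℝ) < q ^ (-(n : ℝ) ^ 2 / (2 * ℓ) + 3 * n / 2) :=
          Real.rpow_pos_of_pos hqpos _
        have hppos : (0:ℝ) < (q / (q - 1)) ^ ((n : ℝ) / ℓ) :=
          Real.rpow_pos_of_pos (div_pos hqpos (by linarith)) _
        have hstep : (2.3749:ℝ) * (q / (q - 1)) ^ ((n : ℝ) / ℓ) <
            q ^ (2:ℝ) * q ^ ((n:ℝ)/ℓ) := by nlinarith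
        exact mul_lt_mul_of_pos_right hstep hpos2
    _ = q ^ ((2:ℝ) + (n:ℝ)/ℓ + (-(n : ℝ) ^ 2 / (2 * ℓ) + 3 * n / 2)) := by
        rw [← Real.rpow_add hqpos, ← Real.rpow_add hqpos]
    _ ≤ q ^ (-(n : ℝ) ^ 2 / ((2 + ε) * ℓ)) :=
        Real.rpow_le_rpow_left_iff hq1 |>.mpr hexp
end

section
/- Let w ∈ F_k be a positive (semigroup) word of length ℓ ≥ 1. Then for all n ∈ ℕ, the probability P_{S_n}(w) that w evaluates to the identity at k independently uniformly random elements of the symmetric group S_n satisfies P_{S_n}(w) ≤ (2ℓ/n)^{⌊n/(2ℓ)⌋}. -/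
/-!
Reveal the permutations only where they are evaluated (principle of deferred decisions). A point `p`
outside the range of everything revealed so far is fixed by `w` only if its trajectory under the
letters of `w` returns to `p`; since `p` has not been revealed as an image, this can only happen at
a step that reveals a new value, which is then uniform among at least `n / 2` candidates. A union
bound over the `ℓ` steps gives probability at most `2ℓ / n`, and the trajectory reveals at most `ℓ`
new values. Repeating this `⌊n / (2ℓ)⌋` times keeps at least `n / 2` values unrevealed throughout.
-/

open Finset Equiv

namespace PermTuple

variable {k n : ℕ}

/-- Partial information on a tuple `σ` of permutations: `(x, y) ∈ π i` records `σ i x = y`. -/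
abbrev Constraints (k n : ℕ) := Fin k → Finset (Fin n × Fin n)

def Extends (S : Fin k → Perm (Fin n)) (π : Constraints k n) : Prop :=
  ∀ i, ∀ a ∈ π i, S i a.1 = a.2

instance (S : Fin k → Perm (Fin n)) (π : Constraints k n) : Decidable (Extends S π) :=
  inferInstanceAs (Decidable (∀ i, ∀ a ∈ π i, S i a.1 = a.2))

def totalCard (π : Constraints k n) : ℕ := ∑ i, #(π i)

def addPair (π : Constraints k n) (i : Fin k) (x y : Fin n) : Constraints k n :=
  Function.update π i (insert (x, y) (π i))

def walk (S : Fin k → Perm (Fin n)) (u : List (Fin k)) (x : Fin n) : Fin n :=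
  u.foldl (fun z i => S i z) x

variable {S : Fin k → Perm (Fin n)} {π : Constraints k n} {i : Fin k} {x y p : Fin n}

lemma walk_cons (u : List (Fin k)) : walk S (i :: u) x = walk S u (S i x) := rfl

lemma walk_reverse (S : Fin k → Perm (Fin n)) (L : List (Fin k)) (z : Fin n) :
    walk S L.reverse z = (L.map S).prod z := by
  induction L with
  | nil => rfl
  | cons i L ih => simp [walk, ← ih]

@[simp] lemma extends_bot (S : Fin k → Perm (Fin n)) : Extends S ⊥ := by
  simp [Extends]

lemma extends_addPair_iff : Extends S (addPair π i x y) ↔ Extends S π ∧ S i x = y := by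
  constructor
  · intro h
    refine ⟨fun j a ha => h j a ?_, h i (x, y) (by simp [addPair])⟩
    rcases eq_or_ne j i with rfl | hj
    · simp [addPair, ha]
    · simpa [addPair, hj] using ha
  · rintro ⟨h, rfl⟩ j a ha
    rcases eq_or_ne j i with rfl | hj
    · simp only [addPair, Function.update_self, mem_insert] at ha
      rcases ha with rfl | ha
      exacts [rfl, h j a ha]
    · exact h j a (by simpa [addPair, hj] using ha)

lemma totalCard_addPair_le : totalCard (addPair π i x y) ≤ totalCard π + 1 := by
  have h : ∀ j, #(addPair π i x y j) ≤ #(π j) + if j = i then 1 else 0 := by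
    intro j
    rcases eq_or_ne j i with rfl | hj
    · simpa [addPair] using card_insert_le _ _
    · simp [addPair, hj]
  calc totalCard (addPair π i x y) ≤ ∑ j, (#(π j) + if j = i then 1 else 0) :=
        sum_le_sum fun j _ => h j
    _ = totalCard π + 1 := by simp [totalCard, sum_add_distrib]

lemma sub_le_card_compl_image_snd {B : ℕ} (hB : totalCard π ≤ B) (i : Fin k) :
    (n : ℝ) - B ≤ #((π i).image Prod.snd)ᶜ := by
  have h₁ : #(π i) ≤ totalCard π :=
    single_le_sum (f := fun j => #(π j)) (fun j _ => Nat.zero_le _) (mem_univ i)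
  have h₂ : #((π i).image Prod.snd) ≤ #(π i) := card_image_le
  rw [card_compl, Fintype.card_fin, sub_le_iff_le_add]
  exact_mod_cast (by omega : n ≤ n - #((π i).image Prod.snd) + B)

lemma exists_forall_notMem_image_snd (h : totalCard π < n) :
    ∃ p, ∀ i, p ∉ (π i).image Prod.snd := by
  by_contra! hcover
  have : #(univ : Finset (Fin n)) ≤ totalCard π :=
    calc #(univ : Finset (Fin n)) ≤ #(univ.biUnion fun i => (π i).image Prod.snd) :=
          card_le_card fun p _ => mem_biUnion.mpr (by simpa using hcover p)
      _ ≤ ∑ i, #((π i).image Prod.snd) := card_biUnion_le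
      _ ≤ totalCard π := sum_le_sum fun i _ => card_image_le
  simp at this
  omega

lemma notMem_image_snd_addPair (hp : ∀ j, p ∉ (π j).image Prod.snd) (hy : y ≠ p)
    (j : Fin k) : p ∉ (addPair π i x y j).image Prod.snd := by
  rcases eq_or_ne j i with rfl | hj
  · simpa [addPair, hy.symm] using hp j
  · simpa [addPair, hj] using hp j

lemma apply_notMem_image_snd (hS : Extends S π) (hx : x ∉ (π i).image Prod.fst) :
    S i x ∉ (π i).image Prod.snd := by
  simp only [mem_image, not_exists, not_and] at hx ⊢
  intro a ha hax
  exact hx a ha ((S i).injective (by rw [hS i a ha, hax]))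

lemma extends_mulSingle_swap_iff {y' : Fin n} (hy : y ∉ (π i).image Prod.snd)
    (hy' : y' ∉ (π i).image Prod.snd) :
    Extends (Pi.mulSingle i (swap y y') * S) π ↔ Extends S π := by
  refine forall_congr' fun j => forall₂_congr fun a ha => ?_
  rcases eq_or_ne j i with rfl | hj
  · have hay : a.2 ≠ y := fun h => hy (mem_image.mpr ⟨a, ha, h⟩)
    have hay' : a.2 ≠ y' := fun h => hy' (mem_image.mpr ⟨a, ha, h⟩)
    simp [swap_apply_eq_iff, swap_apply_of_ne_of_ne hay hay']
  · simp [Pi.mulSingle_eq_of_ne hj]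

lemma card_extends_addPair_congr {y' : Fin n} (hy : y ∉ (π i).image Prod.snd)
    (hy' : y' ∉ (π i).image Prod.snd) :
    #{S | Extends S (addPair π i x y)} = #{S | Extends S (addPair π i x y')} :=
  card_equiv (Equiv.mulLeft (Pi.mulSingle i (swap y y'))) fun S => by
    simp [extends_addPair_iff, extends_mulSingle_swap_iff hy hy', swap_apply_eq_iff]

lemma card_extends_and_eq_sum (hx : x ∉ (π i).image Prod.fst)
    (R : (Fin k → Perm (Fin n)) → Prop) [DecidablePred R] :
    #{S | Extends S π ∧ R S} =
      ∑ y ∈ ((π i).image Prod.snd)ᶜ, #{S | Extends S (addPair π i x y) ∧ R S} := by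
  rw [card_eq_sum_card_fiberwise (f := fun S => S i x) fun S hS =>
    mem_compl.mpr (apply_notMem_image_snd (mem_filter.mp hS).2.1 hx)]
  refine sum_congr rfl fun y _ => ?_
  simp only [filter_filter, extends_addPair_iff]
  exact congrArg card (filter_congr fun S _ => by tauto)

lemma card_extends_addPair_eq_div (hx : x ∉ (π i).image Prod.fst)
    (hy : y ∉ (π i).image Prod.snd) :
    (#{S | Extends S (addPair π i x y)} : ℝ) =
      #{S | Extends S π} / #((π i).image Prod.snd)ᶜ := by
  have hsum := card_extends_and_eq_sum hx fun _ => True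
  simp only [and_true] at hsum
  rw [hsum, sum_congr rfl fun y' hy' => card_extends_addPair_congr (x := x) (mem_compl.mp hy') hy,
    sum_const, smul_eq_mul, Nat.cast_mul, mul_div_cancel_left₀]
  exact Nat.cast_ne_zero.mpr (card_ne_zero_of_mem (mem_compl.mpr hy))

variable {Q : (Fin k → Perm (Fin n)) → Prop} [DecidablePred Q]

lemma card_extends_walk_cons_of_mem {a : Fin n × Fin n} (ha : a ∈ π i) (u : List (Fin k)) :
    #{S | Extends S π ∧ walk S (i :: u) a.1 = p ∧ Q S} =
      #{S | Extends S π ∧ walk S u a.2 = p ∧ Q S} :=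
  congrArg card (filter_congr fun S _ => and_congr_right fun hS => by rw [walk_cons, hS i a ha])

lemma card_extends_walk_cons_eq_sum (hx : x ∉ (π i).image Prod.fst) (u : List (Fin k)) :
    #{S | Extends S π ∧ walk S (i :: u) x = p ∧ Q S} =
      ∑ y ∈ ((π i).image Prod.snd)ᶜ, #{S | Extends S (addPair π i x y) ∧ walk S u y = p ∧ Q S} := by
  rw [card_extends_and_eq_sum hx]
  refine sum_congr rfl fun y _ => congrArg card (filter_congr fun S _ => ?_)
  rw [extends_addPair_iff, walk_cons]
  exact and_congr_right fun h => by rw [h.2]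

/-- Each step of the walk that reveals a new value hits `p`, which is not yet an image, with
probability `1 / #((π i).image Prod.snd)ᶜ ≤ q`; after a hit only the bound `α` on `Q` is used. -/
theorem card_extends_walk_eq_le {α q : ℝ} {B : ℕ} (hα : 0 ≤ α) (hq₀ : 0 ≤ q)
    (hq : 1 ≤ q * (n - B))
    (hQ : ∀ π : Constraints k n, totalCard π ≤ B →
      (#{S | Extends S π ∧ Q S} : ℝ) ≤ α * #{S | Extends S π})
    (u : List (Fin k)) (hp : ∀ i, p ∉ (π i).image Prod.snd) (hux : u ≠ [] ∨ x ≠ p)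
    (hB : totalCard π + u.length ≤ B) :
    (#{S | Extends S π ∧ walk S u x = p ∧ Q S} : ℝ) ≤
      u.length * q * α * #{S | Extends S π} := by
  induction u generalizing π x with
  | nil =>
    have hx : x ≠ p := by simpa using hux
    simp [walk, hx]
  | cons i u ih =>
    rw [List.length_cons] at hB
    by_cases hx : x ∈ (π i).image Prod.fst
    · obtain ⟨a, ha, rfl⟩ := mem_image.mp hx
      rw [card_extends_walk_cons_of_mem ha]
      calc _ ≤ u.length * q * α * #{S | Extends S π} :=
            ih hp (Or.inr fun h => hp i (mem_image.mpr ⟨a, ha, h⟩)) (by omega)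
        _ ≤ (i :: u).length * q * α * #{S | Extends S π} := by gcongr; simp
    · set T := ((π i).image Prod.snd)ᶜ
      set E : ℝ := ((#{S | Extends S π} : ℕ) : ℝ)
      have hT : 1 ≤ q * #T :=
        hq.trans (mul_le_mul_of_nonneg_left (sub_le_card_compl_image_snd (by omega) i) hq₀)
      have hT₀ : (0 : ℝ) < #T := pos_of_mul_pos_right (one_pos.trans_le hT) hq₀
      have hterm : ∀ y ∈ T, (#{S | Extends S (addPair π i x y) ∧ walk S u y = p ∧ Q S} : ℝ) ≤
          ((if y = p then 1 else 0) + u.length * q) * α * (E / #T) := by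
        intro y hy
        have hB' := totalCard_addPair_le (π := π) (i := i) (x := x) (y := y)
        rw [← card_extends_addPair_eq_div hx (mem_compl.mp hy)]
        by_cases hyp : y = p
        · subst hyp
          calc _ ≤ (#{S | Extends S (addPair π i x y) ∧ Q S} : ℝ) :=
                Nat.cast_le.mpr (card_le_card (monotone_filter_right _ fun S _ hS =>
                  ⟨hS.1, hS.2.2⟩))
            _ ≤ α * #{S | Extends S (addPair π i x y)} := hQ _ (by omega)
            _ ≤ _ := by
              rw [if_pos rfl]
              gcongr
              exact le_mul_of_one_le_left hα (le_add_of_nonneg_right (by positivity))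
        · rw [if_neg hyp, zero_add]
          exact ih (notMem_image_snd_addPair hp hyp) (Or.inr hyp) (by omega)
      rw [card_extends_walk_cons_eq_sum hx, Nat.cast_sum]
      calc _ ≤ ∑ y ∈ T, ((if y = p then 1 else 0) + u.length * q) * α * (E / #T) :=
            sum_le_sum hterm
        _ ≤ (1 + #T * (u.length * q)) * α * (E / #T) := by
            rw [← sum_mul, ← sum_mul, sum_add_distrib, sum_ite_eq', sum_const, nsmul_eq_mul]
            gcongr
            split_ifs <;> norm_num
        _ = (1 / #T + u.length * q) * α * E := by field_simp
        _ ≤ (q + u.length * q) * α * E := by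
            gcongr
            rwa [div_le_iff₀ hT₀]
        _ = (i :: u).length * q * α * E := by rw [List.length_cons]; push_cast; ring

/-- Each of the `s` rounds closes the cycle through a point not yet revealed as an image. -/
theorem card_extends_walk_id_le (c : List (Fin k)) (hc : c ≠ []) {q : ℝ} {B : ℕ} (hq₀ : 0 ≤ q)
    (hq : 1 ≤ q * (n - B)) (s : ℕ) (π : Constraints k n)
    (hB : totalCard π + c.length * s ≤ B) :
    (#{S | Extends S π ∧ ∀ z, walk S c z = z} : ℝ) ≤ (c.length * q) ^ s * #{S | Extends S π} := by
  induction s generalizing π with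
  | zero => simpa using card_le_card (monotone_filter_right _ fun S _ hS => hS.1)
  | succ s ih =>
    have hBn : B < n := by
      by_contra! h
      nlinarith [(Nat.cast_le (α := ℝ)).mpr h]
    have hc₁ : 1 ≤ c.length := List.length_pos_iff.mpr hc
    rw [Nat.mul_succ] at hB
    obtain ⟨p, hp⟩ := exists_forall_notMem_image_snd (π := π) (by omega)
    have hq' : 1 ≤ q * (n - ((B - c.length * s : ℕ) : ℝ)) :=
      hq.trans (mul_le_mul_of_nonneg_left (by gcongr; exact Nat.sub_le _ _) hq₀)
    calc (#{S | Extends S π ∧ ∀ z, walk S c z = z} : ℝ)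
        ≤ #{S | Extends S π ∧ walk S c p = p ∧ ∀ z, walk S c z = z} :=
          Nat.cast_le.mpr (card_le_card (monotone_filter_right _ fun S _ hS =>
            ⟨hS.1, hS.2 p, hS.2⟩))
      _ ≤ c.length * q * (c.length * q) ^ s * #{S | Extends S π} :=
          card_extends_walk_eq_le (by positivity) hq₀ hq' (fun π' hπ' => ih π' (by omega)) c hp
            (Or.inl hc) (by omega)
      _ = (c.length * q) ^ (s + 1) * #{S | Extends S π} := by ring

lemma lift_apply_eq_walk {w : FreeGroup (Fin k)} (hw : ∀ a ∈ w.toWord, a.2 = true)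
    (S : Fin k → Perm (Fin n)) (z : Fin n) :
    FreeGroup.lift S w z = walk S (w.toWord.map Prod.fst).reverse z := by
  rw [walk_reverse, ← FreeGroup.mk_toWord (x := w), FreeGroup.lift_mk, FreeGroup.toWord_mk,
    FreeGroup.reduce_toWord, List.map_map,
    List.map_congr_left fun a ha => show _ = (S ∘ Prod.fst) a by simp [hw a ha]]

end PermTuple

open PermTuple

theorem wordProb_positive_symm_general (k ℓ : ℕ) (w : FreeGroup (Fin k))
    (hpos : ∀ p ∈ FreeGroup.toWord w, p.2 = true)
    (hlen : (FreeGroup.toWord w).length = ℓ) (n : ℕ) :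
    (Nat.card {S : Fin k → Equiv.Perm (Fin n) // (FreeGroup.lift S) w = 1} : ℝ) /
        (Nat.card (Equiv.Perm (Fin n))) ^ k ≤
      ((2 * ℓ : ℝ) / n) ^ (n / (2 * ℓ)) := by
  set c := (w.toWord.map Prod.fst).reverse
  have hc : c.length = ℓ := by simp [c, hlen]
  have htotal : (Nat.card (Perm (Fin n)) : ℝ) ^ k = #{S | Extends S (⊥ : Constraints k n)} := by
    simp [Nat.card_eq_fintype_card]
  have hcount : (Nat.card {S : Fin k → Perm (Fin n) // FreeGroup.lift S w = 1} : ℝ) ≤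
      #{S : Fin k → Perm (Fin n) | Extends S ⊥ ∧ ∀ z, walk S c z = z} := by
    rw [Nat.card_eq_fintype_card, Fintype.card_subtype]
    exact Nat.cast_le.mpr (card_le_card (monotone_filter_right _ fun S _ hS =>
      ⟨extends_bot S, fun z => by rw [← lift_apply_eq_walk hpos, hS, Perm.one_apply]⟩))
  rw [div_le_iff₀ (pow_pos (Nat.cast_pos.mpr Nat.card_pos) k), htotal]
  obtain hm | hm := Nat.eq_zero_or_pos (n / (2 * ℓ))
  · rw [hm, pow_zero, one_mul]
    exact hcount.trans (Nat.cast_le.mpr (card_le_card (monotone_filter_right _ fun S _ hS => hS.1)))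
  have hℓ : 0 < ℓ := Nat.pos_of_ne_zero fun h => by simp [h] at hm
  have hℓm : ((2 * ℓ * (n / (2 * ℓ)) : ℕ) : ℝ) ≤ n := by exact_mod_cast Nat.mul_div_le n (2 * ℓ)
  have hn : (0 : ℝ) < n := by exact_mod_cast (by nlinarith [Nat.mul_div_le n (2 * ℓ)] : 0 < n)
  have hq : 1 ≤ 2 / (n : ℝ) * (n - (ℓ * (n / (2 * ℓ)) : ℕ)) := by
    rw [div_mul_eq_mul_div, le_div_iff₀ hn]
    push_cast at hℓm ⊢
    linarith
  calc _ ≤ _ := hcount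
    _ ≤ (c.length * (2 / n)) ^ (n / (2 * ℓ)) * #{S | Extends S (⊥ : Constraints k n)} :=
      card_extends_walk_id_le c (List.ne_nil_of_length_pos (hc ▸ hℓ)) (by positivity) hq _ _
        (by simp [totalCard, hc])
    _ = _ := by rw [hc]; ring

/-- For a positive (semigroup) word `w ∈ F_k` of length `ℓ ≥ 1` and any `n`,
the probability that `w` evaluates to the identity at `k` independent uniformly
random elements of `S_n` is at most `(2ℓ/n)^⌊n/(2ℓ)⌋`. -/
theorem wordProb_positive_symm (k ℓ : ℕ) (hl : 1 ≤ ℓ) (w : FreeGroup (Fin k))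
    (hpos : ∀ p ∈ FreeGroup.toWord w, p.2 = true)
    (hlen : (FreeGroup.toWord w).length = ℓ) (n : ℕ) :
    (Nat.card {S : Fin k → Equiv.Perm (Fin n) // (FreeGroup.lift S) w = 1} : ℝ) /
        (Nat.card (Equiv.Perm (Fin n))) ^ k ≤
      ((2 * ℓ : ℝ) / n) ^ (n / (2 * ℓ)) :=
  wordProb_positive_symm_general k ℓ w hpos hlen n
end
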